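/- Let ι be a nonempty finite type with decidable equality and let α, β be types. Suppose p : ι → PMF (α × β) is a family of probability mass functions whose second-coordinate marginals all agree: for all k, k' : ι, (p k).map Prod.snd = (p k').map Prod.snd. Then there exists a single q : PMF ((ι → α) × β) such that for every k : ι, q.map (fun x => (x.1 k, x.2)) = p k. -/

import Mathlib

open scoped ENNReal

namespace PmfGlue

/-- Product of PMFs along a list of indices, starting from a default function. -/
noncomputable def piList {ι α : Type*} [DecidableEq ι] (f : ι → PMF α) (g₀ : ι → α) :
    List ι → PMF (ι → α)
  | [] => PMF.pure g₀
  | i :: l => (f i).bind fun a => (piList f g₀ l).map (fun g => Function.update g i a)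

theorem piList_map_eval {ι α : Type*} [DecidableEq ι] (f : ι → PMF α) (g₀ : ι → α)
    (l : List ι) (k : ι) (hk : k ∈ l) :
    (piList f g₀ l).map (fun g => g k) = f k := by
  induction l with
  | nil => simp at hk
  | cons i l ih =>
    by_cases hki : k = i
    · subst hki
      simp only [piList, PMF.map_bind, PMF.map_comp]
      have : ∀ a : α, ((fun g : ι → α => g k) ∘ fun g => Function.update g k a)
          = Function.const (ι → α) a := by
        intro a; funext g; simp [Function.comp]
      simp only [this, PMF.map_const, PMF.bind_pure]
    · have hkl : k ∈ l := by
        rcases List.mem_cons.1 hk with h | h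
        · exact absurd h hki
        · exact h
      simp only [piList, PMF.map_bind, PMF.map_comp]
      have : ∀ a : α, ((fun g : ι → α => g k) ∘ fun g => Function.update g i a)
          = fun g : ι → α => g k := by
        intro a; funext g; simp [Function.comp, Function.update_of_ne hki]
      simp only [this]
      rw [show (fun _ : α => (piList f g₀ l).map fun g => g k)
          = fun _ : α => f k from funext fun _ => ih hkl, PMF.bind_const]

end PmfGlue

/-- Lemma 4 of the paper: a family of PMFs on `α × β` indexed by a nonempty finite type,
all agreeing on the `β`-marginal, can be glued into a single joint PMF on
`(ι → α) × β` having each of them as the corresponding two-dimensional marginal. -/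
theorem pmf_glue_common_margin
    {ι α β : Type*} [Fintype ι] [Nonempty ι] [DecidableEq ι]
    (p : ι → PMF (α × β))
    (h : ∀ k k' : ι, (p k).map Prod.snd = (p k').map Prod.snd) :
    ∃ q : PMF ((ι → α) × β), ∀ k : ι, q.map (fun x => (x.1 k, x.2)) = p k := by
  classical
  obtain ⟨k₀⟩ := ‹Nonempty ι›
  set μ : PMF β := (p k₀).map Prod.snd with hμ
  -- the β-marginal of every p k is μ, pointwise as a sum over α
  have hmarg : ∀ (k : ι) (b : β), μ b = ∑' a : α, p k (a, b) := by
    intro k b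
    rw [hμ, h k₀ k, PMF.map_apply]
    rw [ENNReal.tsum_prod']
    refine tsum_congr fun a => ?_
    exact (tsum_eq_single b fun b' hb' => if_neg fun hh => hb' hh.symm).trans (if_pos rfl)
  -- α is nonempty
  obtain ⟨⟨a₀, b₀⟩, -⟩ := (p k₀).support_nonempty
  -- conditional distribution of α given b, for each k
  have cond_aux : ∀ (k : ι) (b : β), μ b ≠ 0 → ∑' a : α, p k (a, b) / μ b = 1 := by
    intro k b hb
    simp only [div_eq_mul_inv, ENNReal.tsum_mul_right]
    rw [← hmarg k b, ENNReal.mul_inv_cancel hb (μ.apply_ne_top b)]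
  set cond : ι → β → PMF α := fun k b =>
    if hb : μ b ≠ 0 then ⟨fun a => p k (a, b) / μ b, ENNReal.summable.hasSum_iff.2 (cond_aux k b hb)⟩
    else PMF.pure a₀ with hcond
  have hcond_apply : ∀ (k : ι) (b : β) (a : α), μ b ≠ 0 → cond k b a = p k (a, b) / μ b := by
    intro k b a hb
    simp only [hcond, dif_pos hb]
    exact congrArg (fun q : PMF α => q a) (dif_pos hb : (dite (μ b ≠ 0) (fun hb => (⟨fun a => p k (a, b) / μ b, ENNReal.summable.hasSum_iff.2 (cond_aux k b hb)⟩ : PMF α)) (fun _ => PMF.pure a₀)) = (⟨fun a => p k (a, b) / μ b, ENNReal.summable.hasSum_iff.2 (cond_aux k b hb)⟩ : PMF α))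
  -- the glued PMF
  refine ⟨μ.bind fun b => (PmfGlue.piList (fun k => cond k b) (fun _ => a₀)
      Finset.univ.toList).map (fun g => (g, b)), fun k => ?_⟩
  rw [PMF.map_bind]
  have hstep : ∀ b : β,
      ((PmfGlue.piList (fun k => cond k b) (fun _ => a₀) Finset.univ.toList).map
        (fun g => (g, b))).map (fun x : (ι → α) × β => (x.1 k, x.2))
      = (cond k b).map (fun a => (a, b)) := by
    intro b
    rw [PMF.map_comp]
    have : ((fun x : (ι → α) × β => (x.1 k, x.2)) ∘ fun g : ι → α => (g, b))
        = (fun a : α => (a, b)) ∘ fun g : ι → α => g k := by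
      funext g; rfl
    rw [this, ← PMF.map_comp]
    rw [PmfGlue.piList_map_eval (fun k => cond k b) (fun _ => a₀) Finset.univ.toList k
      (by simp [Finset.mem_toList])]
  simp only [hstep]
  -- now show μ.bind (fun b => (cond k b).map (a ↦ (a,b))) = p k
  refine PMF.ext fun x => ?_
  obtain ⟨a, b⟩ := x
  rw [PMF.bind_apply]
  have hval : ∀ b' : β, μ b' * ((cond k b').map (fun a => (a, b'))) (a, b)
      = if b' = b then μ b * cond k b a else 0 := by
    intro b'
    by_cases hbb : b' = b
    · subst hbb
      rw [if_pos rfl]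
      congr 1
      rw [PMF.map_apply]
      refine (tsum_eq_single a fun a' ha' => ?_).trans (if_pos rfl)
      refine if_neg fun hh => ha' ?_
      exact (Prod.mk.injEq _ _ _ _ ▸ hh).1.symm
    · rw [if_neg hbb]
      have hz : ((cond k b').map (fun a => (a, b'))) (a, b) = 0 := by
        rw [PMF.map_apply]
        exact ENNReal.tsum_eq_zero.2 fun a' =>
          if_neg fun hh => hbb ((congrArg Prod.snd hh).symm)
      rw [hz, mul_zero]
  rw [tsum_congr hval, tsum_ite_eq]
  by_cases hb : μ b ≠ 0
  · rw [hcond_apply k b a hb, ENNReal.mul_div_cancel hb (μ.apply_ne_top b)]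
  · push_neg at hb
    rw [hb, zero_mul]
    have : p k (a, b) ≤ μ b := by
      rw [hmarg k b]
      exact ENNReal.le_tsum a
    rw [hb] at this
    exact (le_zero_iff.1 this).symm
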